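/- arXiv:2306.05066 — 2 statements merged into one kernel-verified Lean document; each statement's English description precedes it below -/
import Mathlib

section
/- (Any feasible policy is dominated by a two-threshold policy.) Let Ω be a finite set with probability mass p, group label X : Ω → {0,1}, and benefit Δ : Ω → ℝ with Δ ≥ 0. For any policy π : Ω → [0,1] with budget Σ p(ω)π(ω) ≤ b, there exist thresholds δ⁰, δ¹ ≥ 0 and a (possibly randomized on the boundary) policy π' that treats, within each group x, exactly the units with Δ > δˣ (and a fraction of those with Δ = δˣ), uses the same group-wise budgets P(π' = 1, X = x) = Σ_{ω : X(ω)=x} p(ω)π(ω), and achieves utility Σ p(ω)π'(ω)Δ(ω) ≥ Σ p(ω)π(ω)Δ(ω). -/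
/-!
Within each group, sort the units by benefit and fill the group's budget greedily from the top:
this gives a threshold `δ` and a tie-breaking fraction `q` spending exactly the same mass as `π`.
The exchange argument then compares utilities: pointwise `(π' - π) (Δ - δ) ≥ 0`, and the
correction `∑ p (π' - π) δ` vanishes because `π'` and `π` spend the same mass in every group.
-/

open Finset

noncomputable def thresholdPolicy (δ q t : ℝ) : ℝ :=
  if δ < t then 1 else if t = δ then q else 0

section thresholdPolicy

variable {δ q t : ℝ}

theorem thresholdPolicy_of_lt (h : δ < t) : thresholdPolicy δ q t = 1 := if_pos h

theorem thresholdPolicy_of_eq (h : t = δ) : thresholdPolicy δ q t = q := by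
  rw [thresholdPolicy, if_neg h.not_gt, if_pos h]

theorem thresholdPolicy_of_gt (h : t < δ) : thresholdPolicy δ q t = 0 := by
  rw [thresholdPolicy, if_neg h.not_gt, if_neg h.ne]

theorem thresholdPolicy_one : thresholdPolicy δ 1 t = if δ ≤ t then 1 else 0 := by
  rcases lt_trichotomy t δ with h | h | h
  · rw [thresholdPolicy_of_gt h, if_neg h.not_ge]
  · rw [thresholdPolicy_of_eq h, if_pos h.ge]
  · rw [thresholdPolicy_of_lt h, if_pos h.le]

theorem thresholdPolicy_mem_Icc (hq : q ∈ Set.Icc (0 : ℝ) 1) :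
    thresholdPolicy δ q t ∈ Set.Icc (0 : ℝ) 1 := by
  unfold thresholdPolicy
  split_ifs
  exacts [Set.right_mem_Icc.2 zero_le_one, hq, Set.left_mem_Icc.2 zero_le_one]

theorem thresholdPolicy_sub_mul_sub_nonneg {a : ℝ} (ha : a ∈ Set.Icc (0 : ℝ) 1) :
    0 ≤ (thresholdPolicy δ q t - a) * (t - δ) := by
  rcases lt_trichotomy t δ with h | h | h
  · rw [thresholdPolicy_of_gt h]
    nlinarith [ha.1]
  · rw [h, sub_self, mul_zero]
  · rw [thresholdPolicy_of_lt h]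
    nlinarith [ha.2]

end thresholdPolicy

section mass

variable {ι : Type*} (S : Finset ι) {p Δ : ι → ℝ}

theorem sum_mul_thresholdPolicy (δ q : ℝ) :
    ∑ ω ∈ S, p ω * thresholdPolicy δ q (Δ ω) =
      ∑ ω ∈ S with δ < Δ ω, p ω + q * ∑ ω ∈ S with Δ ω = δ, p ω := by
  rw [sum_filter, sum_filter, mul_sum, ← sum_add_distrib]
  refine sum_congr rfl fun ω _ => ?_
  rcases lt_trichotomy (Δ ω) δ with h | h | h
  · rw [thresholdPolicy_of_gt h, if_neg h.not_gt, if_neg h.ne, mul_zero, mul_zero, add_zero]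
  · rw [thresholdPolicy_of_eq h, if_neg h.not_gt, if_pos h, zero_add, mul_comm]
  · rw [thresholdPolicy_of_lt h, if_pos h, if_neg h.ne', mul_one, mul_zero, add_zero]

theorem sum_filter_le_eq_add (δ : ℝ) :
    ∑ ω ∈ S with δ ≤ Δ ω, p ω =
      ∑ ω ∈ S with δ < Δ ω, p ω + ∑ ω ∈ S with Δ ω = δ, p ω := by
  rw [← one_mul (∑ ω ∈ S with Δ ω = δ, p ω), ← sum_mul_thresholdPolicy, sum_filter]
  simp only [thresholdPolicy_one, mul_ite, mul_one, mul_zero]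

/-- The least candidate value `δ` whose strict upper set has mass at most `B` works: the next
smaller candidate has mass above `B`, and its strict upper set is the weak upper set of `δ`. -/
theorem exists_threshold_mass_le_le (hp : ∀ ω ∈ S, 0 ≤ p ω) (hΔ : ∀ ω ∈ S, 0 ≤ Δ ω) {B : ℝ}
    (hB₀ : 0 ≤ B) (hB : B ≤ ∑ ω ∈ S, p ω) :
    ∃ δ, 0 ≤ δ ∧ ∑ ω ∈ S with δ < Δ ω, p ω ≤ B ∧ B ≤ ∑ ω ∈ S with δ ≤ Δ ω, p ω := by
  set V := insert 0 (S.image Δ)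
  have hΔV : ∀ ω ∈ S, Δ ω ∈ V := fun ω hω => mem_insert_of_mem (mem_image_of_mem Δ hω)
  have hV : V.Nonempty := insert_nonempty _ _
  set A := V.filter fun v => ∑ ω ∈ S with v < Δ ω, p ω ≤ B
  have hA : A.Nonempty := by
    refine ⟨V.max' hV, mem_filter.2 ⟨max'_mem _ _, ?_⟩⟩
    rwa [filter_false_of_mem fun ω hω => not_lt.2 (le_max' V _ (hΔV ω hω)), sum_empty]
  obtain ⟨hδV, hδB⟩ := mem_filter.1 (A.min'_mem hA)
  refine ⟨A.min' hA, ?_, hδB, ?_⟩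
  · rcases mem_insert.1 hδV with h | h
    · exact h.ge
    · obtain ⟨ω, hω, hωδ⟩ := mem_image.1 h
      exact hωδ ▸ hΔ ω hω
  by_cases hbelow : (V.filter (· < A.min' hA)).Nonempty
  · obtain ⟨hδ'V, hδ'lt⟩ := mem_filter.1 (max'_mem _ hbelow)
    have hδ'B : B < ∑ ω ∈ S with (V.filter (· < A.min' hA)).max' hbelow < Δ ω, p ω :=
      not_le.1 fun h => hδ'lt.not_ge (min'_le A _ (mem_filter.2 ⟨hδ'V, h⟩))
    refine hδ'B.le.trans (sum_le_sum_of_subset_of_nonneg ?_ fun ω hω _ => hp ω (mem_filter.1 hω).1)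
    intro ω hω
    rw [mem_filter] at hω ⊢
    refine ⟨hω.1, not_lt.1 fun h => hω.2.not_ge (le_max' _ _ ?_)⟩
    exact mem_filter.2 ⟨hΔV ω hω.1, h⟩
  · rwa [filter_true_of_mem fun ω hω => not_lt.1 fun h => hbelow ⟨Δ ω, mem_filter.2 ⟨hΔV ω hω, h⟩⟩]

theorem exists_thresholdPolicy_sum_eq (hp : ∀ ω ∈ S, 0 ≤ p ω) (hΔ : ∀ ω ∈ S, 0 ≤ Δ ω) {B : ℝ}
    (hB₀ : 0 ≤ B) (hB : B ≤ ∑ ω ∈ S, p ω) :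
    ∃ δ q, 0 ≤ δ ∧ q ∈ Set.Icc (0 : ℝ) 1 ∧ ∑ ω ∈ S, p ω * thresholdPolicy δ q (Δ ω) = B := by
  obtain ⟨δ, hδ, hlt, hle⟩ := exists_threshold_mass_le_le S hp hΔ hB₀ hB
  rw [sum_filter_le_eq_add] at hle
  have hseg : B ∈ segment ℝ (∑ ω ∈ S with δ < Δ ω, p ω)
      (∑ ω ∈ S with δ < Δ ω, p ω + ∑ ω ∈ S with Δ ω = δ, p ω) := by
    rw [segment_eq_Icc (hlt.trans hle)]
    exact ⟨hlt, hle⟩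
  rw [segment_eq_image'] at hseg
  obtain ⟨q, hq, hqB⟩ := hseg
  refine ⟨δ, q, hδ, hq, ?_⟩
  rw [sum_mul_thresholdPolicy, ← hqB]
  simp only [add_sub_cancel_left, smul_eq_mul]

end mass

theorem sum_mul_le_sum_mul_of_fiberwise_eq {Ω κ : Type*} [Fintype Ω] [DecidableEq κ]
    {p π π' Δ : Ω → ℝ} {X : Ω → κ} (δ : κ → ℝ) (hp : ∀ ω, 0 ≤ p ω)
    (hmass : ∀ x, ∑ ω with X ω = x, p ω * π' ω = ∑ ω with X ω = x, p ω * π ω)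
    (hexchange : ∀ ω, 0 ≤ (π' ω - π ω) * (Δ ω - δ (X ω))) :
    ∑ ω, p ω * π ω * Δ ω ≤ ∑ ω, p ω * π' ω * Δ ω := by
  have hcorrection : ∑ ω, p ω * (π' ω - π ω) * δ (X ω) = 0 := by
    rw [← sum_fiberwise_of_maps_to fun ω _ => mem_image_of_mem X (mem_univ ω)]
    refine sum_eq_zero fun x _ => ?_
    rw [sum_congr rfl fun ω hω => by rw [(mem_filter.1 hω).2], ← sum_mul]
    simp only [mul_sub, sum_sub_distrib, hmass, sub_self, zero_mul]
  have hgain : 0 ≤ ∑ ω, p ω * ((π' ω - π ω) * (Δ ω - δ (X ω))) :=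
    sum_nonneg fun ω _ => mul_nonneg (hp ω) (hexchange ω)
  have hsplit : ∑ ω, p ω * π' ω * Δ ω - ∑ ω, p ω * π ω * Δ ω =
      ∑ ω, p ω * ((π' ω - π ω) * (Δ ω - δ (X ω))) + ∑ ω, p ω * (π' ω - π ω) * δ (X ω) := by
    rw [← sum_sub_distrib, ← sum_add_distrib]
    exact sum_congr rfl fun ω _ => by ring
  linarith

open Classical in
theorem dominated_by_two_threshold_policy_general {Ω : Type*} [Fintype Ω]
    (p : Ω → ℝ) (hp : ∀ ω, 0 ≤ p ω)
    (X : Ω → Fin 2) (Δ : Ω → ℝ) (hΔ : ∀ ω, 0 ≤ Δ ω)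
    (π : Ω → ℝ) (hπ : ∀ ω, π ω ∈ Set.Icc (0:ℝ) 1) :
    ∃ (δ : Fin 2 → ℝ) (q : Fin 2 → ℝ) (π' : Ω → ℝ),
      (∀ x, 0 ≤ δ x) ∧
      (∀ ω, π' ω ∈ Set.Icc (0:ℝ) 1) ∧
      (∀ ω, δ (X ω) < Δ ω → π' ω = 1) ∧
      (∀ ω, Δ ω = δ (X ω) → π' ω = q (X ω)) ∧
      (∀ ω, Δ ω < δ (X ω) → π' ω = 0) ∧
      (∀ x : Fin 2,
        (∑ ω ∈ Finset.univ.filter (fun ω => X ω = x), p ω * π' ω) =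
        (∑ ω ∈ Finset.univ.filter (fun ω => X ω = x), p ω * π ω)) ∧
      (∑ ω, p ω * π ω * Δ ω) ≤ ∑ ω, p ω * π' ω * Δ ω := by
  have hgroup : ∀ x, ∃ δ q, 0 ≤ δ ∧ q ∈ Set.Icc (0 : ℝ) 1 ∧
      ∑ ω with X ω = x, p ω * thresholdPolicy δ q (Δ ω) = ∑ ω with X ω = x, p ω * π ω :=
    fun x => exists_thresholdPolicy_sum_eq _ (fun ω _ => hp ω) (fun ω _ => hΔ ω)
      (sum_nonneg fun ω _ => mul_nonneg (hp ω) (hπ ω).1)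
      (sum_le_sum fun ω _ => mul_le_of_le_one_right (hp ω) (hπ ω).2)
  choose δ q hδ hq hgroup using hgroup
  set π' := fun ω => thresholdPolicy (δ (X ω)) (q (X ω)) (Δ ω)
  have hmass : ∀ x, ∑ ω with X ω = x, p ω * π' ω = ∑ ω with X ω = x, p ω * π ω :=
    fun x => (sum_congr rfl fun ω hω => by simp only [π', (mem_filter.1 hω).2]).trans (hgroup x)
  exact ⟨δ, q, π', hδ, fun ω => thresholdPolicy_mem_Icc (hq _), fun ω => thresholdPolicy_of_lt,
    fun ω => thresholdPolicy_of_eq, fun ω => thresholdPolicy_of_gt, hmass,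
    sum_mul_le_sum_mul_of_fiberwise_eq δ hp hmass fun ω => thresholdPolicy_sub_mul_sub_nonneg (hπ ω)⟩

open Classical in
/-- Any budget-feasible policy is dominated by a group-wise (randomized) threshold policy
with the same group-wise budgets. -/
theorem dominated_by_two_threshold_policy {Ω : Type*} [Fintype Ω]
    (p : Ω → ℝ) (hp : ∀ ω, 0 ≤ p ω) (hsum : ∑ ω, p ω = 1)
    (X : Ω → Fin 2) (Δ : Ω → ℝ) (hΔ : ∀ ω, 0 ≤ Δ ω)
    (b : ℝ) (π : Ω → ℝ) (hπ : ∀ ω, π ω ∈ Set.Icc (0:ℝ) 1)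
    (hbudget : (∑ ω, p ω * π ω) ≤ b) :
    ∃ (δ : Fin 2 → ℝ) (q : Fin 2 → ℝ) (π' : Ω → ℝ),
      (∀ x, 0 ≤ δ x) ∧
      (∀ ω, π' ω ∈ Set.Icc (0:ℝ) 1) ∧
      (∀ ω, δ (X ω) < Δ ω → π' ω = 1) ∧
      (∀ ω, Δ ω = δ (X ω) → π' ω = q (X ω)) ∧
      (∀ ω, Δ ω < δ (X ω) → π' ω = 0) ∧
      (∀ x : Fin 2,
        (∑ ω ∈ Finset.univ.filter (fun ω => X ω = x), p ω * π' ω) =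
        (∑ ω ∈ Finset.univ.filter (fun ω => X ω = x), p ω * π ω)) ∧
      (∑ ω, p ω * π ω * Δ ω) ≤ ∑ ω, p ω * π' ω * Δ ω :=
  dominated_by_two_threshold_policy_general p hp X Δ hΔ π hπ
end

section
/- In the cancer-surgery SCM, if W has density 2(1-w) on [0,1] (the female group x₁) and the counterfactual benefit is defined by Δ_C = (1/3)·√(1 - (1-W)²), then Δ_C is distributed identically to Δ = W'/3 where W' has density 2w on [0,1] (the male group x₀). That is, the map w ↦ √(1 - (1-w)²) pushes the density 2(1-w) forward to the density 2w on [0,1]. -/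
/-!
Probability integral transform: `F v = 1 - (1 - v)²` and `G w = w²` are the distribution
functions of the densities `2(1 - v)` and `2w` on `[0, 1]`, so each pushes its law to the uniform
law on `(0, 1)`. The map `v ↦ √(1 - (1 - v)²)` is `G⁻¹ ∘ F`, hence it carries the first law to
the second.
-/

open MeasureTheory Set

theorem map_withDensity_deriv_restrict_Ioo {f f' : ℝ → ℝ} {a b : ℝ} (hab : a ≤ b)
    (hf : ContinuousOn f (Icc a b)) (hf' : ∀ x ∈ Ioo a b, HasDerivAt f (f' x) x)
    (hpos : ∀ x ∈ Ioo a b, 0 < f' x) :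
    ((volume.restrict (Ioo a b)).withDensity fun x => ENNReal.ofReal (f' x)).map f =
      volume.restrict (Ioo (f a) (f b)) := by
  have hmono : StrictMonoOn f (Icc a b) :=
    strictMonoOn_of_hasDerivWithinAt_pos (convex_Icc a b) hf
      (by simpa only [interior_Icc] using fun x hx => (hf' x hx).hasDerivWithinAt)
      (by simpa only [interior_Icc] using hpos)
  rw [← hf.image_Ioo_of_strictMonoOn hab hmono,
    ← map_withDensity_abs_det_fderiv_eq_addHaar volume measurableSet_Ioo.nullMeasurableSet
      (fun x hx => (hf' x hx).hasFDerivAt.hasFDerivWithinAt) (hmono.injOn.mono Ioo_subset_Icc_self)]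
  refine congrArg _ (withDensity_congr_ae ?_)
  filter_upwards [ae_restrict_mem measurableSet_Ioo] with x hx
  simp [abs_of_pos (hpos x hx)]

theorem MeasureTheory.Measure.map_map_of_ae_leftInverse {α β : Type*} [MeasurableSpace α]
    [MeasurableSpace β] {μ : Measure α} {f : α → β} {g : β → α} (hf : Measurable f)
    (hg : Measurable g) (hgf : ∀ᵐ x ∂μ, g (f x) = x) : (μ.map f).map g = μ := by
  rw [Measure.map_map hg hf, Measure.map_congr (f := g ∘ f) (g := id) hgf, Measure.map_id]

/-- The map `w ↦ √(1 - (1-w)²)` pushes the density `2(1-w)` on `[0,1]` (female group)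
forward to the density `2w` on `[0,1]` (male group): the counterfactual benefit is
distributed like the factual benefit of the `x₀` group. -/
theorem counterfactual_benefit_pushforward :
    (volume.withDensity
        (Set.indicator (Set.Icc (0:ℝ) 1) (fun v => ENNReal.ofReal (2 * (1 - v))))).map
      (fun v => Real.sqrt (1 - (1 - v) ^ 2)) =
    volume.withDensity
      (Set.indicator (Set.Icc (0:ℝ) 1) (fun w => ENNReal.ofReal (2 * w))) := by
  set U := volume.restrict (Ioo (0:ℝ) 1)
  set μ := U.withDensity fun v => ENNReal.ofReal (2 * (1 - v))
  set ν := U.withDensity fun w => ENNReal.ofReal (2 * w)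
  have hF : μ.map (fun v => 1 - (1 - v) ^ 2) = U := by
    convert map_withDensity_deriv_restrict_Ioo (f := fun v => 1 - (1 - v) ^ 2) zero_le_one
      (by fun_prop)
      (fun x _ => by simpa using ((hasDerivAt_id x).const_sub 1).pow 2 |>.const_sub 1)
      (fun x hx => by linarith [hx.2]) using 3 <;> norm_num
  have hG : ν.map (· ^ 2) = U := by
    convert map_withDensity_deriv_restrict_Ioo (f := (· ^ 2)) zero_le_one (by fun_prop)
      (fun x _ => by simpa using hasDerivAt_pow 2 x) (fun x hx => by linarith [hx.1]) using 3 <;>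
      norm_num
  have hsqrt : ∀ᵐ w ∂ν, √(w ^ 2) = w := by
    refine (withDensity_absolutelyContinuous _ _).ae_le ?_
    filter_upwards [ae_restrict_mem measurableSet_Ioo] with w hw
    exact Real.sqrt_sq hw.1.le
  rw [withDensity_indicator measurableSet_Icc, withDensity_indicator measurableSet_Icc,
    Measure.restrict_congr_set Ioo_ae_eq_Icc.symm]
  calc μ.map (fun v => √(1 - (1 - v) ^ 2)) = (μ.map fun v => 1 - (1 - v) ^ 2).map Real.sqrt :=
        (Measure.map_map (by fun_prop) (by fun_prop)).symm
    _ = ν := by rw [hF, ← hG, Measure.map_map_of_ae_leftInverse (by fun_prop) (by fun_prop) hsqrt]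
end
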